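/- arXiv:2206.11103 — 3 statements merged into one kernel-verified Lean document; each statement's English description precedes it below -/
import Mathlib

section
/- Let C : ℝ^d → ℝ be differentiable with L-Lipschitz gradient for some L > 0, let q_0, …, q_{t−1} ∈ ℝ^d be data points, and let α, β ∈ ℝ with α + β > 0. If α ≤ 0, then for all s ∈ ℝ^d, m_{t,α,β}(s)/(α+β) ≤ C_{t−1}^-(s) ≤ C(s). If instead β ≤ 0, then for all s ∈ ℝ^d, m_{t,α,β}(s)/(α+β) ≥ C_{t−1}^+(s) ≥ C(s). -/
open scoped InnerProductSpace

/-- Linear approximant `ℓ(s; C, q) = C(q) + ∇C(q)·(s − q)`. -/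
noncomputable def lapprox {d : ℕ} (C : EuclideanSpace ℝ (Fin d) → ℝ)
    (q s : EuclideanSpace ℝ (Fin d)) : ℝ :=
  C q + inner ℝ (gradient C q) (s - q)

/-- Data-driven majorant `C_{t−1}^+(s)` built from data points `q_0, …, q_{t−1}`. -/
noncomputable def ddMajorant {d t : ℕ} (ht : 0 < t) (C : EuclideanSpace ℝ (Fin d) → ℝ)
    (L : ℝ) (q : Fin t → EuclideanSpace ℝ (Fin d)) (s : EuclideanSpace ℝ (Fin d)) : ℝ :=
  Finset.univ.inf' (Finset.univ_nonempty_iff.mpr (Fin.pos_iff_nonempty.mp ht))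
    fun i => lapprox C (q i) s + L / 2 * ‖s - q i‖ ^ 2

/-- Data-driven minorant `C_{t−1}^-(s)` built from data points `q_0, …, q_{t−1}`. -/
noncomputable def ddMinorant {d t : ℕ} (ht : 0 < t) (C : EuclideanSpace ℝ (Fin d) → ℝ)
    (L : ℝ) (q : Fin t → EuclideanSpace ℝ (Fin d)) (s : EuclideanSpace ℝ (Fin d)) : ℝ :=
  Finset.univ.sup' (Finset.univ_nonempty_iff.mpr (Fin.pos_iff_nonempty.mp ht))
    fun i => lapprox C (q i) s - L / 2 * ‖s - q i‖ ^ 2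

/-- Surrogate `m_{t,α,β}(s) = α·C_{t−1}^+(s) + β·C_{t−1}^-(s)`. -/
noncomputable def surrogate {d t : ℕ} (ht : 0 < t) (C : EuclideanSpace ℝ (Fin d) → ℝ)
    (L α β : ℝ) (q : Fin t → EuclideanSpace ℝ (Fin d)) (s : EuclideanSpace ℝ (Fin d)) : ℝ :=
  α * ddMajorant ht C L q s + β * ddMinorant ht C L q s

/-- Descent lemma: `|C s − ℓ(s; C, q)| ≤ (L/2)‖s − q‖²`. -/
lemma abs_sub_lapprox_le {d : ℕ} (C : EuclideanSpace ℝ (Fin d) → ℝ) (L : ℝ) (hL : 0 < L)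
    (hdiff : Differentiable ℝ C)
    (hlip : ∀ x y, ‖gradient C y - gradient C x‖ ≤ L * ‖y - x‖)
    (q s : EuclideanSpace ℝ (Fin d)) :
    |C s - lapprox C q s| ≤ L / 2 * ‖s - q‖ ^ 2 := by
  set v := s - q with hv
  set g' : ℝ → ℝ := fun t => inner ℝ (gradient C (q + t • v)) v with hg'
  have hderiv : ∀ t : ℝ, HasDerivAt (fun t : ℝ => C (q + t • v)) (g' t) t := by
    intro t
    have h1 : HasFDerivAt C (InnerProductSpace.toDual ℝ _ (gradient C (q + t • v)))
        (q + t • v) := (hdiff _).hasGradientAt.hasFDerivAt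
    have h2 : HasDerivAt (fun t : ℝ => q + t • v) v t := by
      simpa using ((hasDerivAt_id t).smul_const v).const_add q
    exact h1.comp_hasDerivAt t h2
  have hgradlip : LipschitzWith (Real.toNNReal L) (gradient C) := by
    apply LipschitzWith.of_dist_le_mul
    intro x y
    rw [dist_eq_norm, dist_eq_norm, Real.coe_toNNReal L hL.le]
    exact hlip y x
  have hcont : Continuous g' := by
    have : Continuous fun t : ℝ => q + t • v :=
      continuous_const.add (continuous_id.smul continuous_const)
    exact (hgradlip.continuous.comp this).inner continuous_const
  have hint : ∫ t in (0:ℝ)..1, g' t = C s - C q := by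
    have := intervalIntegral.integral_eq_sub_of_hasDerivAt
      (f := fun t : ℝ => C (q + t • v)) (f' := g')
      (fun t _ => hderiv t) (hcont.intervalIntegrable 0 1)
    simpa [hv] using this
  have key : C s - lapprox C q s = ∫ t in (0:ℝ)..1, (g' t - g' 0) := by
    rw [intervalIntegral.integral_sub (hcont.intervalIntegrable 0 1)
      (intervalIntegrable_const), hint, intervalIntegral.integral_const]
    simp [lapprox, hg', hv]
    ring
  rw [key]
  have hbound : ∀ t ∈ Set.Icc (0:ℝ) 1, |g' t - g' 0| ≤ L * ‖v‖ ^ 2 * t := by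
    intro t ht
    have : g' t - g' 0 = inner ℝ (gradient C (q + t • v) - gradient C (q + (0:ℝ) • v)) v := by
      simp [hg', inner_sub_left]
    rw [this]
    calc |inner ℝ (gradient C (q + t • v) - gradient C (q + (0:ℝ) • v)) v|
        ≤ ‖gradient C (q + t • v) - gradient C (q + (0:ℝ) • v)‖ * ‖v‖ :=
          abs_real_inner_le_norm _ _
      _ ≤ (L * ‖(q + t • v) - (q + (0:ℝ) • v)‖) * ‖v‖ := by
          gcongr; exact hlip _ _
      _ = L * ‖v‖ ^ 2 * t := by
          have : (q + t • v) - (q + (0:ℝ) • v) = t • v := by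
            simp
          rw [this, norm_smul]
          simp [Real.norm_eq_abs, abs_of_nonneg ht.1]
          ring
  calc |∫ t in (0:ℝ)..1, (g' t - g' 0)|
      ≤ ∫ t in (0:ℝ)..1, |g' t - g' 0| := by
        simpa [Real.norm_eq_abs] using
          intervalIntegral.norm_integral_le_integral_norm
            (f := fun t => g' t - g' 0) (μ := MeasureTheory.volume) zero_le_one
    _ ≤ ∫ t in (0:ℝ)..1, L * ‖v‖ ^ 2 * t := by
        apply intervalIntegral.integral_mono_on zero_le_one
        · exact ((hcont.sub continuous_const).abs).intervalIntegrable 0 1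
        · exact (continuous_const.mul continuous_id).intervalIntegrable 0 1
        · exact hbound
    _ = L / 2 * ‖v‖ ^ 2 := by
        rw [intervalIntegral.integral_const_mul, integral_id]
        ring

/-- For `α + β > 0`: if `α ≤ 0`, the scaled surrogate underestimates `C_{t−1}^-` (hence `C`);
if `β ≤ 0`, it overestimates `C_{t−1}^+` (hence `C`). -/
theorem surrogate_scaled_bounds {d t : ℕ} (ht : 0 < t)
    (C : EuclideanSpace ℝ (Fin d) → ℝ) (L : ℝ) (hL : 0 < L)
    (hdiff : Differentiable ℝ C)
    (hlip : ∀ x y, ‖gradient C y - gradient C x‖ ≤ L * ‖y - x‖)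
    (q : Fin t → EuclideanSpace ℝ (Fin d)) (α β : ℝ) (hαβ : 0 < α + β) :
    (α ≤ 0 → ∀ s, surrogate ht C L α β q s / (α + β) ≤ ddMinorant ht C L q s ∧
      ddMinorant ht C L q s ≤ C s) ∧
    (β ≤ 0 → ∀ s, ddMajorant ht C L q s ≤ surrogate ht C L α β q s / (α + β) ∧
      C s ≤ ddMajorant ht C L q s) := by
  have hmin : ∀ s, ddMinorant ht C L q s ≤ C s := by
    intro s
    apply Finset.sup'_le
    intro i _
    have := abs_sub_lapprox_le C L hL hdiff hlip (q i) s
    rw [abs_le] at this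
    linarith [this.1]
  have hmaj : ∀ s, C s ≤ ddMajorant ht C L q s := by
    intro s
    apply Finset.le_inf'
    intro i _
    have := abs_sub_lapprox_le C L hL hdiff hlip (q i) s
    rw [abs_le] at this
    linarith [this.2]
  have hmm : ∀ s, ddMinorant ht C L q s ≤ ddMajorant ht C L q s :=
    fun s => (hmin s).trans (hmaj s)
  constructor
  · intro hα s
    refine ⟨?_, hmin s⟩
    rw [div_le_iff₀ hαβ]
    have : α * ddMajorant ht C L q s ≤ α * ddMinorant ht C L q s :=
      mul_le_mul_of_nonpos_left (hmm s) hα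
    unfold surrogate
    nlinarith
  · intro hβ s
    refine ⟨?_, hmaj s⟩
    rw [le_div_iff₀ hαβ]
    have : β * ddMajorant ht C L q s ≤ β * ddMinorant ht C L q s :=
      mul_le_mul_of_nonpos_left (hmm s) hβ
    unfold surrogate
    nlinarith
end

section
/- Let C : ℝ^d → ℝ be differentiable with L-Lipschitz gradient for some L > 0, let q_0, …, q_{t−1} ∈ ℝ^d be data points, and let α, β ∈ ℝ be arbitrary. Then the surrogate function m_{t,α,β} is a difference of convex functions on ℝ^d: there exist convex functions g, h : ℝ^d → ℝ such that m_{t,α,β}(s) = g(s) − h(s) for all s ∈ ℝ^d. -/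
open Finset

variable {d t : ℕ}

local notation "E" => EuclideanSpace ℝ (Fin d)

/-- convexity of squared norm -/
lemma convexOn_normSq' : ConvexOn ℝ Set.univ (fun s : EuclideanSpace ℝ (Fin d) => ‖s‖ ^ 2) := by
  refine ⟨convex_univ, ?_⟩
  intro x _ y _ u v hu hv huv
  simp only [smul_eq_mul]
  have h1 : ‖u • x + v • y‖ ^ 2 =
      u^2 * ‖x‖^2 + 2*(u*v)*(inner ℝ x y : ℝ) + v^2 * ‖y‖^2 := by
    rw [norm_add_sq_real]
    simp [norm_smul, real_inner_smul_left, real_inner_smul_right, abs_of_nonneg hu,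
      abs_of_nonneg hv, Finset.mul_sum]
    ring_nf
  have h2 : (inner ℝ x y : ℝ) ≤ ‖x‖ * ‖y‖ := real_inner_le_norm x y
  nlinarith [mul_nonneg hu hv, sq_nonneg (‖x‖ - ‖y‖), norm_nonneg x, norm_nonneg y]

/-- sup' of affine-like functions is convex -/
lemma convexOn_sup'_aff (ne : (Finset.univ : Finset (Fin t)).Nonempty)
    (F : Fin t → EuclideanSpace ℝ (Fin d) → ℝ)
    (hF : ∀ i x y (u v : ℝ), 0 ≤ u → 0 ≤ v → u + v = 1 →
      F i (u • x + v • y) = u * F i x + v * F i y) :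
    ConvexOn ℝ Set.univ (fun s => Finset.univ.sup' ne (fun i => F i s)) := by
  refine ⟨convex_univ, ?_⟩
  intro x _ y _ u v hu hv huv
  simp only [smul_eq_mul]
  apply Finset.sup'_le
  intro i _
  rw [hF i x y u v hu hv huv]
  have h1 : F i x ≤ Finset.univ.sup' ne (fun j => F j x) :=
    Finset.le_sup' (fun j => F j x) (Finset.mem_univ i)
  have h2 : F i y ≤ Finset.univ.sup' ne (fun j => F j y) :=
    Finset.le_sup' (fun j => F j y) (Finset.mem_univ i)
  nlinarith

lemma sup'_const_add (ne : (Finset.univ : Finset (Fin t)).Nonempty) (c : ℝ) (f : Fin t → ℝ) :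
    Finset.univ.sup' ne (fun i => c + f i) = c + Finset.univ.sup' ne f := by
  apply le_antisymm
  · exact Finset.sup'_le _ _ fun i _ => by
      have := Finset.le_sup' f (Finset.mem_univ i); linarith
  · obtain ⟨j, _, hj⟩ := Finset.exists_mem_eq_sup' ne f
    rw [hj]
    exact Finset.le_sup' (fun i => c + f i) (Finset.mem_univ j)

lemma inf'_const_add (ne : (Finset.univ : Finset (Fin t)).Nonempty) (c : ℝ) (f : Fin t → ℝ) :
    Finset.univ.inf' ne (fun i => c + f i) = c - Finset.univ.sup' ne (fun i => -(f i)) := by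
  apply le_antisymm
  · obtain ⟨j, _, hj⟩ := Finset.exists_mem_eq_sup' ne (fun i => -(f i))
    have := Finset.inf'_le (fun i => c + f i) (Finset.mem_univ j)
    rw [hj]; show _ ≤ c - -(f j); rw [sub_neg_eq_add]; exact this
  · exact Finset.le_inf' _ _ fun i _ => by
      have := Finset.le_sup' (fun i => -(f i)) (Finset.mem_univ i); linarith


/-- The surrogate `m_{t,α,β}` is a difference of convex functions on `ℝ^d`. -/
theorem surrogate_diff_of_convex {d t : ℕ} (ht : 0 < t)
    (C : EuclideanSpace ℝ (Fin d) → ℝ) (L : ℝ) (hL : 0 < L)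
    (hdiff : Differentiable ℝ C)
    (hlip : ∀ x y, ‖gradient C y - gradient C x‖ ≤ L * ‖y - x‖)
    (q : Fin t → EuclideanSpace ℝ (Fin d)) (α β : ℝ) :
    ∃ g h : EuclideanSpace ℝ (Fin d) → ℝ,
      ConvexOn ℝ Set.univ g ∧ ConvexOn ℝ Set.univ h ∧
      ∀ s, surrogate ht C L α β q s = g s - h s := by

  have ne : (Finset.univ : Finset (Fin t)).Nonempty :=
    Finset.univ_nonempty_iff.mpr (Fin.pos_iff_nonempty.mp ht)
  set A : EuclideanSpace ℝ (Fin d) → ℝ := fun s => L / 2 * ‖s‖ ^ 2 with hAdef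
  set a : Fin t → EuclideanSpace ℝ (Fin d) → ℝ :=
    fun i s => lapprox C (q i) s - L * (inner ℝ s (q i) : ℝ) + L / 2 * ‖q i‖ ^ 2 with hadef
  set b : Fin t → EuclideanSpace ℝ (Fin d) → ℝ :=
    fun i s => lapprox C (q i) s + L * (inner ℝ s (q i) : ℝ) - L / 2 * ‖q i‖ ^ 2 with hbdef
  have hl : ∀ i (x y : EuclideanSpace ℝ (Fin d)) (u v : ℝ), 0 ≤ u → 0 ≤ v → u + v = 1 →
      lapprox C (q i) (u • x + v • y) = u * lapprox C (q i) x + v * lapprox C (q i) y := by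
    intro i x y u v hu hv huv
    have hv' : v = 1 - u := by linarith
    subst hv'
    have hcombo : u • x + (1 - u) • y - q i = u • (x - q i) + (1 - u) • (y - q i) := by
      rw [smul_sub, smul_sub, sub_smul, sub_smul, one_smul, one_smul]; abel
    simp only [lapprox, hcombo, inner_add_right, real_inner_smul_right]
    ring
  have hinner : ∀ i (x y : EuclideanSpace ℝ (Fin d)) (u v : ℝ),
      (inner ℝ (u • x + v • y) (q i) : ℝ) = u * inner ℝ x (q i) + v * inner ℝ y (q i) := by
    intro i x y u v
    rw [inner_add_left, real_inner_smul_left, real_inner_smul_left]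
  have haff_a : ∀ i x y (u v : ℝ), 0 ≤ u → 0 ≤ v → u + v = 1 →
      (fun s => -(a i s)) (u • x + v • y) = u * (-(a i x)) + v * (-(a i y)) := by
    intro i x y u v hu hv huv
    have hv' : v = 1 - u := by linarith
    subst hv'
    simp only [hadef, hl i x y u (1-u) hu hv huv, hinner i x y u (1-u)]
    ring
  have haff_b : ∀ i x y (u v : ℝ), 0 ≤ u → 0 ≤ v → u + v = 1 →
      b i (u • x + v • y) = u * b i x + v * b i y := by
    intro i x y u v hu hv huv
    have hv' : v = 1 - u := by linarith
    subst hv'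
    simp only [hbdef, hl i x y u (1-u) hu hv huv, hinner i x y u (1-u)]
    ring
  set N : EuclideanSpace ℝ (Fin d) → ℝ := fun s => Finset.univ.sup' ne (fun i => -(a i s)) with hNdef
  set M : EuclideanSpace ℝ (Fin d) → ℝ := fun s => Finset.univ.sup' ne (fun i => b i s) with hMdef
  have hA : ConvexOn ℝ Set.univ A := by
    have h0 : (0:ℝ) ≤ L / 2 := by positivity
    simpa [hAdef, smul_eq_mul] using convexOn_normSq'.smul h0
  have hN : ConvexOn ℝ Set.univ N := convexOn_sup'_aff ne _ haff_a
  have hM : ConvexOn ℝ Set.univ M := convexOn_sup'_aff ne _ haff_b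
  have hmaj : ∀ s, ddMajorant ht C L q s = A s - N s := by
    intro s
    unfold ddMajorant
    have h1 : (fun i => lapprox C (q i) s + L / 2 * ‖s - q i‖ ^ 2)
        = fun i => A s + a i s := by
      funext i
      rw [hadef, hAdef]
      simp only [norm_sub_sq_real]
      ring
    rw [h1, inf'_const_add ne (A s) (fun i => a i s)]
  have hmin : ∀ s, ddMinorant ht C L q s = M s - A s := by
    intro s
    unfold ddMinorant
    have h1 : (fun i => lapprox C (q i) s - L / 2 * ‖s - q i‖ ^ 2)
        = fun i => -(A s) + b i s := by
      funext i
      rw [hbdef, hAdef]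
      simp only [norm_sub_sq_real]
      ring
    rw [h1, sup'_const_add ne (-(A s)) (fun i => b i s)]
    ring
  refine ⟨fun s => max α 0 * A s + max (-α) 0 * N s + (max β 0 * M s + max (-β) 0 * A s),
          fun s => max (-α) 0 * A s + max α 0 * N s + (max (-β) 0 * M s + max β 0 * A s),
          ?_, ?_, ?_⟩
  · refine ConvexOn.add (ConvexOn.add ?_ ?_) (ConvexOn.add ?_ ?_)
    · simpa [smul_eq_mul] using hA.smul (le_max_right α 0)
    · simpa [smul_eq_mul] using hN.smul (le_max_right (-α) 0)
    · simpa [smul_eq_mul] using hM.smul (le_max_right β 0)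
    · simpa [smul_eq_mul] using hA.smul (le_max_right (-β) 0)
  · refine ConvexOn.add (ConvexOn.add ?_ ?_) (ConvexOn.add ?_ ?_)
    · simpa [smul_eq_mul] using hA.smul (le_max_right (-α) 0)
    · simpa [smul_eq_mul] using hN.smul (le_max_right α 0)
    · simpa [smul_eq_mul] using hM.smul (le_max_right (-β) 0)
    · simpa [smul_eq_mul] using hA.smul (le_max_right β 0)
  · intro s
    clear_value A a b N M
    rw [surrogate, hmaj s, hmin s]
    have hα : max α 0 - max (-α) 0 = α := by
      rcases le_total α 0 with h | h
      · simp [max_eq_right h, max_eq_left (neg_nonneg.mpr h)]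
      · simp [max_eq_left h, max_eq_right (neg_nonpos.mpr h)]
    have hβ : max β 0 - max (-β) 0 = β := by
      rcases le_total β 0 with h | h
      · simp [max_eq_right h, max_eq_left (neg_nonneg.mpr h)]
      · simp [max_eq_left h, max_eq_right (neg_nonpos.mpr h)]
    linear_combination (N s - A s) * hα + (A s - M s) * hβ
end

section
/- Let C : ℝ^d → ℝ be differentiable with L-Lipschitz gradient for some L > 0, let q_0, …, q_{t−1} ∈ ℝ^d be data points, and let α ∈ ℝ. Then for all s ∈ ℝ^d, m_{t,α,α}(s) = α·[ min_{0≤i≤t−1} (ℓ(s; C, q_i) − L·(q_i·s − ‖q_i‖²/2)) + max_{0≤j≤t−1} (ℓ(s; C, q_j) + L·(q_j·s − ‖q_j‖²/2)) ]; that is, m_{t,α,α} is α times the sum of a pointwise minimum of t affine functions and a pointwise maximum of t affine functions, and in particular m_{t,α,α} is a piecewise affine function. -/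
/-- For `α = β`, the surrogate `m_{t,α,α}` equals `α` times the sum of a pointwise minimum
of `t` affine functions and a pointwise maximum of `t` affine functions; in particular it is
piecewise affine. -/
theorem surrogate_eq_piecewise_affine {d t : ℕ} (ht : 0 < t)
    (C : EuclideanSpace ℝ (Fin d) → ℝ) (L : ℝ) (hL : 0 < L)
    (hdiff : Differentiable ℝ C)
    (hlip : ∀ x y, ‖gradient C y - gradient C x‖ ≤ L * ‖y - x‖)
    (q : Fin t → EuclideanSpace ℝ (Fin d)) (α : ℝ) :
    ∀ s, surrogate ht C L α α q s
      = α * ((Finset.univ.inf' (Finset.univ_nonempty_iff.mpr (Fin.pos_iff_nonempty.mp ht))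
            (fun i => lapprox C (q i) s - L * ((inner ℝ (q i) s : ℝ) - ‖q i‖ ^ 2 / 2)))
          + (Finset.univ.sup' (Finset.univ_nonempty_iff.mpr (Fin.pos_iff_nonempty.mp ht))
            (fun j => lapprox C (q j) s + L * ((inner ℝ (q j) s : ℝ) - ‖q j‖ ^ 2 / 2)))) := by
  intro s
  have hne := Finset.univ_nonempty_iff.mpr (Fin.pos_iff_nonempty.mp ht)
  have key : ∀ i : Fin t, L / 2 * ‖s - q i‖ ^ 2
      = L / 2 * ‖s‖ ^ 2 - L * ((inner ℝ (q i) s : ℝ) - ‖q i‖ ^ 2 / 2) := by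
    intro i
    have h := norm_sub_sq_real s (q i)
    rw [h, real_inner_comm s (q i)]
    ring
  have hmaj : ddMajorant ht C L q s
      = (Finset.univ.inf' hne
          (fun i => lapprox C (q i) s - L * ((inner ℝ (q i) s : ℝ) - ‖q i‖ ^ 2 / 2)))
        + L / 2 * ‖s‖ ^ 2 := by
    rw [show (Finset.univ.inf' hne
          (fun i => lapprox C (q i) s - L * ((inner ℝ (q i) s : ℝ) - ‖q i‖ ^ 2 / 2)))
        + L / 2 * ‖s‖ ^ 2 = Finset.univ.inf' hne
          (fun i => lapprox C (q i) s - L * ((inner ℝ (q i) s : ℝ) - ‖q i‖ ^ 2 / 2)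
            + L / 2 * ‖s‖ ^ 2) from map_finset_inf' (OrderIso.addRight _) hne _]
    apply Finset.inf'_congr hne rfl
    intro i _
    rw [key i]; ring
  have hmin : ddMinorant ht C L q s
      = (Finset.univ.sup' hne
          (fun j => lapprox C (q j) s + L * ((inner ℝ (q j) s : ℝ) - ‖q j‖ ^ 2 / 2)))
        - L / 2 * ‖s‖ ^ 2 := by
    rw [sub_eq_add_neg, Finset.sup'_add]
    apply Finset.sup'_congr hne rfl
    intro i _
    rw [key i]; ring
  show α * ddMajorant ht C L q s + α * ddMinorant ht C L q s = _
  rw [hmaj, hmin]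
  ring
end
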